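/- Let 𝓗 be a real separable Hilbert space, let E₁,…,Eₙ be measurable spaces and let Φ : E₁×…×Eₙ → 𝓗 be a bounded measurable function such that for every index ℓ and all choices of coordinates z₁,…,zₙ and z′_ℓ one has ‖Φ(z₁,…,z_ℓ,…,zₙ) − Φ(z₁,…,z′_ℓ,…,zₙ)‖_𝓗 ≤ R. If Z₁,…,Zₙ are independent random variables with Zᵢ taking values in Eᵢ, then for every ξ > 0, P(‖Φ(Z₁,…,Zₙ) − E[Φ(Z₁,…,Zₙ)]‖_𝓗 > ξ + R√n) ≤ exp(−2ξ²/(nR²)). -/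

import Mathlib

/-!
Put `f z = ‖Φ z - EΦ‖`. Changing one coordinate moves `f` by at most `R`, so McDiarmid's
inequality for real functions makes `f - Ef` sub-Gaussian with variance proxy `nR²/4`, which
gives `P(f ≥ Ef + ξ) ≤ exp(-2ξ²/(nR²))`. It is proved by induction on the number of coordinates:
integrating out the first coordinate preserves the bounded differences, and, the others being
frozen, Hoeffding's lemma controls the first one. The same induction, with Pythagoras in `𝓗` in
place of Hoeffding's lemma, gives the Efron–Stein bound `E‖Φ - EΦ‖² ≤ nR²`, hence `Ef ≤ R√n`.
Independence identifies the law of `(Z₁, …, Zₙ)` with the product of the marginals.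
-/

open MeasureTheory ProbabilityTheory Bornology Set

section FinCons

variable {n : ℕ} {E : Fin (n + 1) → Type*} [∀ i, MeasurableSpace (E i)]

lemma measurable_finCons :
    Measurable fun p : E 0 × (∀ j : Fin n, E j.succ) => (Fin.cons p.1 p.2 : ∀ i, E i) := by
  refine measurable_pi_iff.2 fun i => ?_
  cases i using Fin.cases with
  | zero => exact measurable_fst
  | succ j => exact (measurable_pi_apply j).comp measurable_snd

lemma measurePreserving_finCons (μ : ∀ i, Measure (E i)) [∀ i, SigmaFinite (μ i)] :
    MeasurePreserving (fun p : E 0 × (∀ j : Fin n, E j.succ) => (Fin.cons p.1 p.2 : ∀ i, E i))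
      ((μ 0).prod (Measure.pi fun j => μ j.succ)) (Measure.pi μ) := by
  refine ⟨measurable_finCons, (Measure.pi_eq fun s hs => ?_).symm⟩
  rw [Measure.map_apply measurable_finCons (MeasurableSet.univ_pi hs), Fin.prod_univ_succ,
    ← Measure.pi_pi, ← Measure.prod_prod]
  congr 1 with ⟨y, x⟩
  simp [Fin.forall_fin_succ]

theorem integral_pi_fin_succ (μ : ∀ i, Measure (E i)) [∀ i, SigmaFinite (μ i)]
    {F : Type*} [NormedAddCommGroup F] [NormedSpace ℝ F] {f : (∀ i, E i) → F}
    (hf : Integrable f (Measure.pi μ)) :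
    ∫ z, f z ∂Measure.pi μ = ∫ x, ∫ y, f (Fin.cons y x) ∂μ 0 ∂Measure.pi fun j => μ j.succ := by
  rw [← (measurePreserving_finCons μ).map_eq] at hf ⊢
  rw [integral_map measurable_finCons.aemeasurable hf.1]
  exact integral_prod_symm _ (hf.comp_measurable measurable_finCons)

lemma mgf_sub_integral_pi_fin_succ (μ : ∀ i, Measure (E i)) [∀ i, SigmaFinite (μ i)]
    {f : (∀ i, E i) → ℝ} {t : ℝ}
    (ht : Integrable (fun z => Real.exp (t * (f z - ∫ z, f z ∂Measure.pi μ))) (Measure.pi μ)) :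
    mgf (fun z => f z - ∫ z, f z ∂Measure.pi μ) (Measure.pi μ) t =
      ∫ x, Real.exp (t * ((∫ y, f (Fin.cons y x) ∂μ 0) - ∫ z, f z ∂Measure.pi μ)) *
        mgf (fun y => f (Fin.cons y x) - ∫ y, f (Fin.cons y x) ∂μ 0) (μ 0) t
        ∂Measure.pi fun j => μ j.succ := by
  rw [mgf, integral_pi_fin_succ μ ht]
  congr with x
  rw [mgf, ← integral_const_mul]
  congr with y
  rw [← Real.exp_add]
  ring_nf

end FinCons

section BoundedFunctions

variable {α : Type*} [MeasurableSpace α] {μ : Measure α}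

lemma memLp_of_isBounded_range {F : Type*} [NormedAddCommGroup F] [IsFiniteMeasure μ]
    {g : α → F} (hm : AEStronglyMeasurable g μ) (hb : IsBounded (range g)) (p : ENNReal) :
    MemLp g p μ := by
  obtain ⟨C, hC⟩ := isBounded_iff_forall_norm_le.1 hb
  exact .of_bound hm C (ae_of_all _ fun y => hC _ (mem_range_self y))

lemma dist_integral_le_of_forall_dist_le {F : Type*} [NormedAddCommGroup F] [NormedSpace ℝ F]
    [IsProbabilityMeasure μ] {g g' : α → F} (hg : Integrable g μ) (hg' : Integrable g' μ)
    {C : ℝ} (h : ∀ y, dist (g y) (g' y) ≤ C) :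
    dist (∫ y, g y ∂μ) (∫ y, g' y ∂μ) ≤ C := by
  rw [dist_eq_norm, ← integral_sub hg hg']
  simpa using norm_integral_le_of_norm_le_const (μ := μ)
    (ae_of_all _ fun y => (dist_eq_norm (g y) (g' y)).symm.trans_le (h y))

lemma integrable_exp_mul_of_isBounded_range [IsFiniteMeasure μ] {g : α → ℝ}
    (hm : AEMeasurable g μ) (hb : IsBounded (range g)) (t : ℝ) :
    Integrable (fun x => Real.exp (t * g x)) μ := by
  obtain ⟨C, hC⟩ := isBounded_iff_forall_norm_le.1 hb
  exact integrable_exp_mul_of_mem_Icc hm (ae_of_all _ fun x => abs_le.1 (hC _ (mem_range_self x)))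

lemma hasSubgaussianMGF_of_forall_dist_le [IsProbabilityMeasure μ] {g : α → ℝ}
    (hm : AEMeasurable g μ) {c : ℝ} (h : ∀ y y', dist (g y) (g y') ≤ c) :
    HasSubgaussianMGF (fun y => g y - ∫ y, g y ∂μ) ((‖c‖₊ / 2) ^ 2) μ := by
  have := nonempty_of_isProbabilityMeasure μ
  have hbdd : BddBelow (range g) := (Metric.isBounded_range_iff.2 ⟨c, h⟩).bddBelow
  have hIcc (y : α) : g y ∈ Icc (⨅ y, g y) ((⨅ y, g y) + c) :=
    ⟨ciInf_le hbdd y, sub_le_iff_le_add.1 <| le_ciInf fun y' =>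
      sub_le_comm.1 ((le_abs_self _).trans (h y y'))⟩
  simpa using hasSubgaussianMGF_of_mem_Icc hm (ae_of_all _ hIcc)

variable {H : Type*} [NormedAddCommGroup H] [InnerProductSpace ℝ H] [CompleteSpace H]
  [IsProbabilityMeasure μ] {A : α → H}

lemma integral_norm_sub_sq_eq (hA : MemLp A 2 μ) (v : H) :
    ∫ y, ‖A y - v‖ ^ 2 ∂μ = ∫ y, ‖A y - ∫ y, A y ∂μ‖ ^ 2 ∂μ + ‖(∫ y, A y ∂μ) - v‖ ^ 2 := by
  set a := ∫ y, A y ∂μ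
  have hA1 : Integrable (fun y => A y - a) μ := (hA.integrable one_le_two).sub (integrable_const a)
  have hsplit (y : α) : ‖A y - v‖ ^ 2 =
      ‖A y - a‖ ^ 2 + (2 * inner ℝ (a - v) (A y - a) + ‖a - v‖ ^ 2) := by
    rw [← sub_add_sub_cancel (A y) a v, norm_add_sq_real, real_inner_comm]
    ring
  have hcross : ∫ y, inner ℝ (a - v) (A y - a) ∂μ = 0 := by
    rw [integral_inner hA1, integral_sub (hA.integrable one_le_two) (integrable_const a)]
    simp [a]
  have hsq : Integrable (fun y => ‖A y - a‖ ^ 2) μ :=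
    (hA.sub (memLp_const a)).integrable_norm_pow' (p := 2)
  have hinner : Integrable (fun y => 2 * inner ℝ (a - v) (A y - a)) μ :=
    (hA1.const_inner (a - v)).const_mul 2
  have hrest : Integrable (fun y => 2 * inner ℝ (a - v) (A y - a) + ‖a - v‖ ^ 2) μ :=
    hinner.add (integrable_const _)
  simp_rw [hsplit]
  rw [integral_add hsq hrest, integral_add hinner (integrable_const _), integral_const_mul, hcross]
  simp

lemma integral_norm_sub_sq_le (hA : MemLp A 2 μ) {c : ℝ} (h : ∀ y y', dist (A y) (A y') ≤ c)
    (v : H) : ∫ y, ‖A y - v‖ ^ 2 ∂μ ≤ c ^ 2 + ‖(∫ y, A y ∂μ) - v‖ ^ 2 := by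
  have hdev (y : α) : ‖A y - ∫ y, A y ∂μ‖ ≤ c := by
    simpa [dist_eq_norm] using dist_integral_le_of_forall_dist_le (μ := μ)
      (integrable_const (A y)) (hA.integrable one_le_two) (h y)
  rw [integral_norm_sub_sq_eq hA v]
  gcongr
  simpa using integral_mono_of_nonneg (ae_of_all μ fun y => by positivity)
    (integrable_const (c ^ 2)) (ae_of_all _ fun y => pow_le_pow_left₀ (norm_nonneg _) (hdev y) 2)

end BoundedFunctions

def BoundedDifferences {ι : Type*} [DecidableEq ι] {E : ι → Type*} {F : Type*}
    [PseudoMetricSpace F] (f : (∀ i, E i) → F) (c : ℝ) : Prop :=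
  ∀ (i : ι) (z : ∀ i, E i) (y : E i), dist (f z) (f (Function.update z i y)) ≤ c

namespace BoundedDifferences

section Basic

variable {ι : Type*} [DecidableEq ι] {E : ι → Type*} {c : ℝ}

section Metric

variable {F : Type*} [PseudoMetricSpace F] {f : (∀ i, E i) → F}

lemma nonneg (hf : BoundedDifferences f c) (i : ι) (z : ∀ i, E i) : 0 ≤ c := by
  simpa using hf i z (z i)

lemma dist_piecewise_le (hf : BoundedDifferences f c) (z w : ∀ i, E i) (s : Finset ι) :
    dist (f z) (f (s.piecewise w z)) ≤ s.card * c := by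
  induction s using Finset.induction_on with
  | empty => simp
  | insert a s ha ih =>
    rw [Finset.piecewise_insert, Finset.card_insert_of_notMem ha, Nat.cast_succ, add_one_mul]
    exact (dist_triangle _ _ _).trans (add_le_add ih (hf _ _ _))

lemma dist_le_card_mul [Fintype ι] (hf : BoundedDifferences f c) (z w : ∀ i, E i) :
    dist (f z) (f w) ≤ Fintype.card ι * c := by
  simpa using hf.dist_piecewise_le z w Finset.univ

lemma isBounded_range [Fintype ι] (hf : BoundedDifferences f c) : IsBounded (range f) :=
  Metric.isBounded_range_iff.2 ⟨_, hf.dist_le_card_mul⟩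

end Metric

variable {F : Type*} [NormedAddCommGroup F] {f : (∀ i, E i) → F}

lemma sub_const (hf : BoundedDifferences f c) (m : F) :
    BoundedDifferences (fun z => f z - m) c := by
  simpa [BoundedDifferences] using hf

lemma norm (hf : BoundedDifferences f c) : BoundedDifferences (fun z => ‖f z‖) c :=
  fun i z y => (dist_norm_norm_le _ _).trans ((dist_eq_norm _ _).symm.trans_le (hf i z y))

lemma memLp [Fintype ι] [∀ i, MeasurableSpace (E i)] (hf : BoundedDifferences f c)
    {μ : Measure (∀ i, E i)} [IsFiniteMeasure μ] (hm : AEStronglyMeasurable f μ) (p : ENNReal) :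
    MemLp f p μ :=
  memLp_of_isBounded_range hm hf.isBounded_range p

end Basic

section FinCons

variable {n : ℕ} {E : Fin (n + 1) → Type*} {F : Type*} {f : (∀ i, E i) → F} {c : ℝ}

lemma dist_cons_le [PseudoMetricSpace F] (hf : BoundedDifferences f c)
    (x : ∀ j : Fin n, E j.succ) (y y' : E 0) :
    dist (f (Fin.cons y x)) (f (Fin.cons y' x)) ≤ c := by
  simpa [Fin.update_cons_zero] using hf 0 (Fin.cons y x) y'

variable [∀ i, MeasurableSpace (E i)] [NormedAddCommGroup F]

lemma memLp_cons (hf : BoundedDifferences f c) (hm : StronglyMeasurable f)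
    (ν : Measure (E 0)) [IsFiniteMeasure ν] (x : ∀ j : Fin n, E j.succ) (p : ENNReal) :
    MemLp (fun y => f (Fin.cons y x)) p ν :=
  memLp_of_isBounded_range
    (hm.comp_measurable (measurable_finCons.comp measurable_prodMk_right)).aestronglyMeasurable
    (hf.isBounded_range.subset (range_comp_subset_range _ f)) p

lemma integral_cons [NormedSpace ℝ F] (hf : BoundedDifferences f c) (hm : StronglyMeasurable f)
    (ν : Measure (E 0)) [IsProbabilityMeasure ν] :
    BoundedDifferences (fun x : ∀ j : Fin n, E j.succ => ∫ y, f (Fin.cons y x) ∂ν) c := by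
  intro j x x'
  refine dist_integral_le_of_forall_dist_le ((hf.memLp_cons hm ν _ 1).integrable le_rfl)
    ((hf.memLp_cons hm ν _ 1).integrable le_rfl) fun y => ?_
  simpa [Fin.cons_update] using hf j.succ (Fin.cons y x) x'

end FinCons

section Pi

variable {n : ℕ} {E : Fin n → Type*} [∀ i, MeasurableSpace (E i)] (μ : ∀ i, Measure (E i))
  [∀ i, IsProbabilityMeasure (μ i)] {c : ℝ}

theorem hasSubgaussianMGF_pi {f : (∀ i, E i) → ℝ} (hf : BoundedDifferences f c)
    (hm : StronglyMeasurable f) :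
    HasSubgaussianMGF (fun z => f z - ∫ z, f z ∂Measure.pi μ) (n * (‖c‖₊ / 2) ^ 2)
      (Measure.pi μ) := by
  induction n with
  | zero =>
    have hzero (z : ∀ i, E i) : f z - ∫ z, f z ∂Measure.pi μ = 0 := by
      simp [integral_unique, Subsingleton.elim z default]
    simpa only [hzero, Nat.cast_zero, zero_mul] using HasSubgaussianMGF.fun_zero
  | succ n ih =>
    set ν := Measure.pi fun j : Fin n => μ j.succ
    set G := fun x : ∀ j : Fin n, E j.succ => ∫ y, f (Fin.cons y x) ∂μ 0
    have hG : HasSubgaussianMGF (fun x => G x - ∫ x, G x ∂ν) (n * (‖c‖₊ / 2) ^ 2) ν :=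
      ih _ (hf.integral_cons hm (μ 0)) (hm.comp_measurable measurable_finCons).integral_prod_left'
    have hmean : ∫ z, f z ∂Measure.pi μ = ∫ x, G x ∂ν :=
      integral_pi_fin_succ μ ((hf.memLp hm.aestronglyMeasurable 1).integrable le_rfl)
    have hslice (x) : HasSubgaussianMGF (fun y => f (Fin.cons y x) - G x) ((‖c‖₊ / 2) ^ 2) (μ 0) :=
      hasSubgaussianMGF_of_forall_dist_le (hf.memLp_cons hm (μ 0) x 1).1.aemeasurable
        (hf.dist_cons_le x)
    have hint (t : ℝ) :
        Integrable (fun z => Real.exp (t * (f z - ∫ z, f z ∂Measure.pi μ))) (Measure.pi μ) :=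
      integrable_exp_mul_of_isBounded_range (hm.measurable.sub_const _).aemeasurable
        (hf.sub_const _).isBounded_range t
    refine ⟨hint, fun t => ?_⟩
    calc mgf (fun z => f z - ∫ z, f z ∂Measure.pi μ) (Measure.pi μ) t
        = ∫ x, Real.exp (t * (G x - ∫ x, G x ∂ν)) *
            mgf (fun y => f (Fin.cons y x) - G x) (μ 0) t ∂ν := by
          rw [mgf_sub_integral_pi_fin_succ μ (hint t), hmean]
      _ ≤ ∫ x, Real.exp (t * (G x - ∫ x, G x ∂ν)) * Real.exp ((‖c‖₊ / 2) ^ 2 * t ^ 2 / 2) ∂ν :=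
          integral_mono_of_nonneg (ae_of_all _ fun x => mul_nonneg (Real.exp_pos _).le mgf_nonneg)
            ((hG.integrable_exp_mul t).mul_const _)
            (ae_of_all _ fun x => mul_le_mul_of_nonneg_left ((hslice x).mgf_le t)
              (Real.exp_pos _).le)
      _ = mgf (fun x => G x - ∫ x, G x ∂ν) ν t * Real.exp ((‖c‖₊ / 2) ^ 2 * t ^ 2 / 2) :=
          integral_mul_const _ _
      _ ≤ Real.exp (n * (‖c‖₊ / 2) ^ 2 * t ^ 2 / 2) * Real.exp ((‖c‖₊ / 2) ^ 2 * t ^ 2 / 2) := by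
          gcongr
          simpa using hG.mgf_le t
      _ = _ := by
          rw [← Real.exp_add]
          push_cast
          ring_nf

theorem measureReal_sub_integral_ge_le {f : (∀ i, E i) → ℝ} (hf : BoundedDifferences f c)
    (hm : StronglyMeasurable f) {ξ : ℝ} (hξ : 0 ≤ ξ) :
    (Measure.pi μ).real {z | ξ ≤ f z - ∫ z, f z ∂Measure.pi μ} ≤
      Real.exp (-(2 * ξ ^ 2) / (n * c ^ 2)) := by
  refine ((hf.hasSubgaussianMGF_pi μ hm).measure_ge_le hξ).trans_eq ?_
  push_cast
  rw [Real.norm_eq_abs, div_pow, sq_abs]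
  ring_nf

variable {H : Type*} [NormedAddCommGroup H] [InnerProductSpace ℝ H] [CompleteSpace H]
  {Φ : (∀ i, E i) → H}

theorem integral_norm_sub_integral_sq_pi_le (hf : BoundedDifferences Φ c)
    (hm : StronglyMeasurable Φ) :
    ∫ z, ‖Φ z - ∫ z, Φ z ∂Measure.pi μ‖ ^ 2 ∂Measure.pi μ ≤ n * c ^ 2 := by
  induction n with
  | zero => simp [integral_unique]
  | succ n ih =>
    set ν := Measure.pi fun j : Fin n => μ j.succ
    set G := fun x : ∀ j : Fin n, E j.succ => ∫ y, Φ (Fin.cons y x) ∂μ 0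
    set m := ∫ z, Φ z ∂Measure.pi μ
    have hGm : StronglyMeasurable G := (hm.comp_measurable measurable_finCons).integral_prod_left'
    have hGf := hf.integral_cons hm (μ 0)
    have hmean : m = ∫ x, G x ∂ν :=
      integral_pi_fin_succ μ ((hf.memLp hm.aestronglyMeasurable 1).integrable le_rfl)
    have hslice (x : ∀ j : Fin n, E j.succ) :
        ∫ y, ‖Φ (Fin.cons y x) - m‖ ^ 2 ∂μ 0 ≤ c ^ 2 + ‖G x - m‖ ^ 2 :=
      integral_norm_sub_sq_le (hf.memLp_cons hm (μ 0) x 2) (hf.dist_cons_le x) m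
    have hGsq : Integrable (fun x => ‖G x - m‖ ^ 2) ν :=
      ((hGf.sub_const m).memLp (hGm.sub stronglyMeasurable_const).aestronglyMeasurable 2
        ).integrable_norm_pow' (p := 2)
    calc ∫ z, ‖Φ z - m‖ ^ 2 ∂Measure.pi μ
        = ∫ x, ∫ y, ‖Φ (Fin.cons y x) - m‖ ^ 2 ∂μ 0 ∂ν :=
          integral_pi_fin_succ μ (((hf.sub_const m).memLp
            (hm.sub stronglyMeasurable_const).aestronglyMeasurable 2).integrable_norm_pow' (p := 2))
      _ ≤ ∫ x, (c ^ 2 + ‖G x - m‖ ^ 2) ∂ν :=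
          integral_mono_of_nonneg (ae_of_all _ fun x => integral_nonneg fun y => by positivity)
            ((integrable_const _).add hGsq) (ae_of_all _ hslice)
      _ = c ^ 2 + ∫ x, ‖G x - m‖ ^ 2 ∂ν := by
          rw [integral_add (integrable_const _) hGsq]
          simp
      _ ≤ c ^ 2 + n * c ^ 2 := by
          rw [hmean]
          gcongr
          exact ih _ hGf hGm
      _ = (n + 1 : ℕ) * c ^ 2 := by
          push_cast
          ring

theorem integral_norm_sub_integral_pi_le (hf : BoundedDifferences Φ c)
    (hm : StronglyMeasurable Φ) :
    ∫ z, ‖Φ z - ∫ z, Φ z ∂Measure.pi μ‖ ∂Measure.pi μ ≤ c * √n := by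
  set g := fun z => ‖Φ z - ∫ z, Φ z ∂Measure.pi μ‖
  have hg : MemLp g 2 (Measure.pi μ) :=
    (hf.sub_const _).norm.memLp (hm.sub stronglyMeasurable_const).norm.aestronglyMeasurable 2
  have hsq : (∫ z, g z ∂Measure.pi μ) ^ 2 ≤ (c * √n) ^ 2 := by
    have hvar := variance_eq_sub hg ▸ variance_nonneg g (Measure.pi μ)
    rw [mul_pow, Real.sq_sqrt n.cast_nonneg, mul_comm]
    refine (sub_nonneg.1 hvar).trans ?_
    simpa using hf.integral_norm_sub_integral_sq_pi_le μ hm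
  have hc : 0 ≤ c * √n := by
    rcases n.eq_zero_or_pos with rfl | hn
    · simp
    have := fun i => nonempty_of_isProbabilityMeasure (μ i)
    exact mul_nonneg (hf.nonneg ⟨0, hn⟩ (Classical.arbitrary _)) (Real.sqrt_nonneg _)
  exact (pow_le_pow_iff_left₀ (integral_nonneg fun z => norm_nonneg _) hc two_ne_zero).1 hsq

end Pi

end BoundedDifferences

theorem hilbert_mcdiarmid_deviation_general
    {Ω : Type*} [MeasureSpace Ω] [IsProbabilityMeasure (ℙ : Measure Ω)]
    {H : Type*} [NormedAddCommGroup H] [InnerProductSpace ℝ H] [CompleteSpace H]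
    {n : ℕ} {E : Fin n → Type*} [mE : ∀ i, MeasurableSpace (E i)]
    (Φ : (∀ i, E i) → H) (hΦmeas : StronglyMeasurable Φ)
    (R : ℝ)
    (hdiff : ∀ (ℓ : Fin n) (z : ∀ i, E i) (z' : E ℓ),
      ‖Φ z - Φ (Function.update z ℓ z')‖ ≤ R)
    (Z : ∀ i, Ω → E i) (hZmeas : ∀ i, Measurable (Z i))
    (hindep : iIndepFun Z ℙ)
    (ξ : ℝ) (hξ : 0 < ξ) :
    ℙ {ω | ξ + R * Real.sqrt n <
        ‖Φ (fun i => Z i ω) - ∫ ω', Φ (fun i => Z i ω') ∂ℙ‖} ≤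
      ENNReal.ofReal (Real.exp (-(2 * ξ ^ 2) / (n * R ^ 2))) := by
  set μ := fun i => (ℙ : Measure Ω).map (Z i)
  have (i : Fin n) : IsProbabilityMeasure (μ i) :=
    Measure.isProbabilityMeasure_map (hZmeas i).aemeasurable
  have hZ : Measurable fun ω i => Z i ω := measurable_pi_iff.2 hZmeas
  have hmap : (ℙ : Measure Ω).map (fun ω i => Z i ω) = Measure.pi μ :=
    hindep.map_fun_eq_pi_map fun i => (hZmeas i).aemeasurable
  have hΦ : BoundedDifferences Φ R := fun i z y => (dist_eq_norm _ _).trans_le (hdiff i z y)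
  have hmeanΦ : ∫ ω, Φ (fun i => Z i ω) ∂ℙ = ∫ z, Φ z ∂Measure.pi μ := by
    rw [← hmap, integral_map hZ.aemeasurable (hmap ▸ hΦmeas.aestronglyMeasurable)]
  rw [hmeanΦ]
  set m := ∫ z, Φ z ∂Measure.pi μ
  set f := fun z => ‖Φ z - m‖
  have hf : Measurable f := by fun_prop
  have hmean_norm : ∫ z, f z ∂Measure.pi μ ≤ R * √n := hΦ.integral_norm_sub_integral_pi_le μ hΦmeas
  have htail := (hΦ.sub_const m).norm.measureReal_sub_integral_ge_le μ hf.stronglyMeasurable hξ.le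
  calc ℙ {ω | ξ + R * √n < f (fun i => Z i ω)}
      ≤ ℙ ((fun ω i => Z i ω) ⁻¹' {z | ξ ≤ f z - ∫ z, f z ∂Measure.pi μ}) :=
        measure_mono fun ω (hω : ξ + R * √n < f (fun i => Z i ω)) => show ξ ≤ _ by linarith
    _ = ENNReal.ofReal ((Measure.pi μ).real {z | ξ ≤ f z - ∫ z, f z ∂Measure.pi μ}) := by
        rw [ofReal_measureReal, ← hmap,
          Measure.map_apply hZ (measurableSet_le measurable_const (hf.sub_const _))]
    _ ≤ _ := ENNReal.ofReal_le_ofReal htail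

/-- **McDiarmid's bounded differences inequality, Hilbert space version.**
If `Φ` is a bounded measurable function of `n` independent random variables with values in a
real separable Hilbert space, whose value changes by at most `R` in norm when a single
coordinate is modified, then for every `ξ > 0`,
`P(‖Φ(Z) − EΦ(Z)‖ > ξ + R√n) ≤ exp(−2ξ²/(nR²))`. -/
theorem hilbert_mcdiarmid_deviation
    {Ω : Type*} [MeasureSpace Ω] [IsProbabilityMeasure (ℙ : Measure Ω)]
    {H : Type*} [NormedAddCommGroup H] [InnerProductSpace ℝ H] [CompleteSpace H]
    [TopologicalSpace.SeparableSpace H]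
    {n : ℕ} {E : Fin n → Type*} [mE : ∀ i, MeasurableSpace (E i)]
    (Φ : (∀ i, E i) → H) (hΦmeas : StronglyMeasurable Φ)
    (hΦbdd : ∃ C : ℝ, ∀ z, ‖Φ z‖ ≤ C)
    (R : ℝ)
    (hdiff : ∀ (ℓ : Fin n) (z : ∀ i, E i) (z' : E ℓ),
      ‖Φ z - Φ (Function.update z ℓ z')‖ ≤ R)
    (Z : ∀ i, Ω → E i) (hZmeas : ∀ i, Measurable (Z i))
    (hindep : iIndepFun Z ℙ)
    (ξ : ℝ) (hξ : 0 < ξ) :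
    ℙ {ω | ξ + R * Real.sqrt n <
        ‖Φ (fun i => Z i ω) - ∫ ω', Φ (fun i => Z i ω') ∂ℙ‖} ≤
      ENNReal.ofReal (Real.exp (-(2 * ξ ^ 2) / (n * R ^ 2))) :=
  hilbert_mcdiarmid_deviation_general (mE := mE) Φ hΦmeas R hdiff Z hZmeas hindep ξ hξ
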